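/- The function 𝒲(B) = Σ_{k=0}^{n-1} (|B v_k| − 1)² + (det B − 1)², where v_k = (cos(kπ/2n), sin(kπ/2n)), has the property that its symmetry group under right multiplication B ↦ B·R, intersected with SO(2), is a finite group. -/

import Mathlib

open Real

/-- The set of 2×2 special orthogonal matrices (SO(2)). -/
def SO2 : Set (Matrix (Fin 2) (Fin 2) ℝ) :=
  {A | A ∈ Matrix.orthogonalGroup (Fin 2) ℝ ∧ A.det = 1}

/-- The Euclidean norm of a vector in ℝ². -/
noncomputable def enorm2 (w : Fin 2 → ℝ) : ℝ := Real.sqrt (w 0 ^ 2 + w 1 ^ 2)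

/-- The lattice direction `v k = (cos(kπ/2n), sin(kπ/2n))`. -/
noncomputable def latticeVec (n : ℕ) (k : ℕ) : Fin 2 → ℝ :=
  ![Real.cos (k * π / (2 * n)), Real.sin (k * π / (2 * n))]

/-- The archetype `𝒲(B) = Σ_{k=0}^{n-1} (|B v_k| − 1)² + (det B − 1)²`. -/
noncomputable def Wn (n : ℕ) (B : Matrix (Fin 2) (Fin 2) ℝ) : ℝ :=
  (∑ k ∈ Finset.range n, (enorm2 (B.mulVec (latticeVec n k)) - 1) ^ 2) + (B.det - 1) ^ 2

/- ### Auxiliary lemmas -/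

lemma aux_sum_cos2 (n : ℕ) (hn : 1 ≤ n) :
    ∑ k ∈ Finset.range n, Real.cos (2 * k * (π / (2 * n))) = 1 := by
  set θ : ℝ := π / (2 * n) with hθ
  have hn0 : (n : ℝ) ≠ 0 := by positivity
  have hθpos : 0 < θ := by positivity
  have hθlt : θ < π := by
    rw [hθ]
    rw [div_lt_iff₀ (by positivity)]
    nlinarith [Real.pi_pos, (by exact_mod_cast hn : (1:ℝ) ≤ n)]
  have hsin : Real.sin θ ≠ 0 := ne_of_gt (Real.sin_pos_of_pos_of_lt_pi hθpos hθlt)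
  have tel := Finset.sum_range_sub (fun k : ℕ => Real.sin ((2 * (k:ℝ) - 1) * θ)) n
  have key : ∀ k ∈ Finset.range n,
      Real.cos (2 * k * θ) * (2 * Real.sin θ)
        = Real.sin ((2 * ((k:ℝ)+1) - 1) * θ) - Real.sin ((2 * (k:ℝ) - 1) * θ) := by
    intro k _
    have h1 : (2 * ((k:ℝ)+1) - 1) * θ = 2 * k * θ + θ := by ring
    have h2 : (2 * (k:ℝ) - 1) * θ = 2 * k * θ - θ := by ring
    rw [h1, h2, Real.sin_add, Real.sin_sub]
    ring
  have hsum : (∑ k ∈ Finset.range n, Real.cos (2 * k * θ)) * (2 * Real.sin θ)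
      = 2 * Real.sin θ := by
    rw [Finset.sum_mul, Finset.sum_congr rfl key]
    have : ∀ k : ℕ, Real.sin ((2 * ((k:ℝ)+1) - 1) * θ) = Real.sin ((2 * ((k+1:ℕ):ℝ) - 1) * θ) := by
      intro k; push_cast; ring_nf
    simp_rw [this]
    rw [tel]
    have hend : (2 * (n:ℝ) - 1) * θ = π - θ := by
      rw [hθ]; field_simp
    have h0 : (2 * ((0:ℕ):ℝ) - 1) * θ = -θ := by push_cast; ring
    rw [hend, h0, Real.sin_pi_sub, Real.sin_neg]
    ring
  field_simp at hsum
  exact hsum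

lemma aux_Wn_row0 (n : ℕ) (t : ℝ) (g : Matrix (Fin 2) (Fin 2) ℝ) :
    Wn n ((Matrix.of ![![t, 0], ![0, 0]] : Matrix (Fin 2) (Fin 2) ℝ) * g) =
      (∑ k ∈ Finset.range n,
        (|t| * |g 0 0 * Real.cos (k * π / (2 * n)) + g 0 1 * Real.sin (k * π / (2 * n))| - 1) ^ 2)
      + 1 := by
  unfold Wn
  have hdet : ((Matrix.of ![![t, 0], ![0, 0]] : Matrix (Fin 2) (Fin 2) ℝ) * g).det = 0 := by
    rw [Matrix.det_mul]
    simp [Matrix.det_fin_two]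
  rw [hdet]
  norm_num
  apply Finset.sum_congr rfl
  intro k _
  congr 1
  unfold enorm2 latticeVec
  simp [Matrix.mulVec, Matrix.mul_apply, Fin.sum_univ_two, Matrix.vecMul, dotProduct]
  rw [← abs_mul, ← Real.sqrt_sq_eq_abs]
  congr 1
  ring

lemma aux_Wn_row1 (n : ℕ) (t : ℝ) (g : Matrix (Fin 2) (Fin 2) ℝ) :
    Wn n ((Matrix.of ![![0, 0], ![0, t]] : Matrix (Fin 2) (Fin 2) ℝ) * g) =
      (∑ k ∈ Finset.range n,
        (|t| * |g 1 0 * Real.cos (k * π / (2 * n)) + g 1 1 * Real.sin (k * π / (2 * n))| - 1) ^ 2)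
      + 1 := by
  unfold Wn
  have hdet : ((Matrix.of ![![0, 0], ![0, t]] : Matrix (Fin 2) (Fin 2) ℝ) * g).det = 0 := by
    rw [Matrix.det_mul]
    simp [Matrix.det_fin_two]
  rw [hdet]
  norm_num
  apply Finset.sum_congr rfl
  intro k _
  congr 1
  unfold enorm2 latticeVec
  simp [Matrix.mulVec, Matrix.mul_apply, Fin.sum_univ_two, Matrix.vecMul, dotProduct]
  rw [← abs_mul, ← Real.sqrt_sq_eq_abs]
  congr 1
  ring

lemma aux_key_eq (n : ℕ) (u w : ℕ → ℝ)
    (h1 : ∑ k ∈ Finset.range n, (|u k| - 1)^2 = ∑ k ∈ Finset.range n, (|w k| - 1)^2)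
    (h2 : ∑ k ∈ Finset.range n, (2*|u k| - 1)^2 = ∑ k ∈ Finset.range n, (2*|w k| - 1)^2) :
    ∑ k ∈ Finset.range n, (u k)^2 = ∑ k ∈ Finset.range n, (w k)^2 := by
  have e1 : ∀ x:ℝ, (|x| - 1)^2 = x^2 - 2*|x| + 1 := fun x => by
    rw [sub_sq, sq_abs]; ring
  have e2 : ∀ x:ℝ, (2*|x| - 1)^2 = 4*x^2 - 4*|x| + 1 := fun x => by
    rw [sub_sq, mul_pow, sq_abs]; ring
  simp only [e1, e2, Finset.sum_add_distrib, Finset.sum_sub_distrib, ← Finset.mul_sum] at h1 h2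
  linarith

lemma aux_finite_pairs (T : ℝ) :
    {p : ℝ × ℝ | p.1^2 + p.2^2 = 1 ∧ p.2 * (p.2 - p.1 * T) = 0}.Finite := by
  set r : ℝ := Real.sqrt (1 + T^2) with hr
  have hrpos : 0 < r := Real.sqrt_pos.mpr (by positivity)
  have hr2 : r^2 = 1 + T^2 := Real.sq_sqrt (by positivity)
  apply Set.Finite.subset
    (Set.toFinite {((1:ℝ),(0:ℝ)), ((-1:ℝ),(0:ℝ)), (1/r, T/r), (-(1/r), -(T/r))})
  rintro ⟨x, y⟩ ⟨h1, h2⟩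
  dsimp only at h1 h2
  rcases mul_eq_zero.mp h2 with hy | hy
  · subst hy
    have : (x - 1) * (x + 1) = 0 := by nlinarith
    rcases mul_eq_zero.mp this with h | h
    · left; simp [show x = 1 by linarith]
    · right; left; simp [show x = -1 by linarith]
  · have hyx : y = x * T := by linarith
    have hx2 : x^2 * r^2 = 1 := by rw [hr2]; nlinarith
    have : (x - 1/r) * (x + 1/r) = 0 := by
      field_simp
      nlinarith
    rcases mul_eq_zero.mp this with h | h
    · right; right; left
      have hx : x = 1/r := by linarith
      simp [hx, hyx]
      field_simp
    · right; right; right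
      have hx : x = -(1/r) := by linarith
      simp [hx, hyx]
      field_simp

/-- The symmetry group of the archetype
`𝒲(B) = Σ_{k=0}^{n-1} (|B v_k| − 1)² + (det B − 1)²`, intersected with `SO(2)`,
is a finite group: this archetype is not isotropic, it has a discrete symmetry
group. -/
theorem stmt_5 (n : ℕ) (hn : 1 ≤ n) :
    {g : Matrix (Fin 2) (Fin 2) ℝ | g ∈ SO2 ∧
      ∀ B : Matrix (Fin 2) (Fin 2) ℝ, Wn n (B * g) = Wn n B}.Finite := by
  classical
  -- trig identities
  have hCS : (∑ k ∈ Finset.range n, Real.cos (k * π / (2 * n))^2)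
      - (∑ k ∈ Finset.range n, Real.sin (k * π / (2 * n))^2) = 1 := by
    rw [← Finset.sum_sub_distrib, ← aux_sum_cos2 n hn]
    apply Finset.sum_congr rfl
    intro k _
    have h2 : (2:ℝ) * k * (π / (2 * n)) = 2 * (k * π / (2 * n)) := by ring
    rw [h2, Real.cos_two_mul]
    nlinarith [Real.sin_sq_add_cos_sq ((k:ℝ) * π / (2 * n))]
  -- Wn on diagonal rank-one matrices
  have hB0 : ∀ t : ℝ, Wn n (Matrix.of ![![t, 0], ![0, 0]]) =
      (∑ k ∈ Finset.range n, (|t| * |Real.cos (k * π / (2 * n))| - 1) ^ 2) + 1 := by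
    intro t
    have h := aux_Wn_row0 n t 1
    rw [mul_one] at h
    rw [h]
    congr 1
    apply Finset.sum_congr rfl
    intro k _
    norm_num [Matrix.one_apply]
  have hB1 : ∀ t : ℝ, Wn n (Matrix.of ![![0, 0], ![0, t]]) =
      (∑ k ∈ Finset.range n, (|t| * |Real.sin (k * π / (2 * n))| - 1) ^ 2) + 1 := by
    intro t
    have h := aux_Wn_row1 n t 1
    rw [mul_one] at h
    rw [h]
    congr 1
    apply Finset.sum_congr rfl
    intro k _
    norm_num [Matrix.one_apply]
  -- the injection into pairs
  apply Set.Finite.of_finite_image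
    (f := fun g : Matrix (Fin 2) (Fin 2) ℝ => ((g 0 0, g 0 1), (g 1 1, g 1 0)))
  · apply Set.Finite.subset
      ((aux_finite_pairs (2 * ∑ k ∈ Finset.range n,
          Real.cos (k * π / (2 * n)) * Real.sin (k * π / (2 * n)))).prod
        (aux_finite_pairs (-(2 * ∑ k ∈ Finset.range n,
          Real.cos (k * π / (2 * n)) * Real.sin (k * π / (2 * n))))))
    rintro _ ⟨g, ⟨hSO, hinv⟩, rfl⟩
    obtain ⟨horth, hdet⟩ := hSO
    rw [Matrix.mem_orthogonalGroup_iff] at horth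
    have h00 : g 0 0 ^ 2 + g 0 1 ^ 2 = 1 := by
      have := congrFun (congrFun horth 0) 0
      simp [Matrix.mul_apply, Fin.sum_univ_two, Matrix.one_apply,
        Matrix.star_eq_conjTranspose, Matrix.conjTranspose_apply] at this
      nlinarith [this]
    have h11 : g 1 0 ^ 2 + g 1 1 ^ 2 = 1 := by
      have := congrFun (congrFun horth 1) 1
      simp [Matrix.mul_apply, Fin.sum_univ_two, Matrix.one_apply,
        Matrix.star_eq_conjTranspose, Matrix.conjTranspose_apply] at this
      nlinarith [this]
    -- the two sum identities for row 0
    have E10 := hinv (Matrix.of ![![1, 0], ![0, 0]])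
    have E20 := hinv (Matrix.of ![![2, 0], ![0, 0]])
    rw [aux_Wn_row0, hB0] at E10 E20
    simp only [abs_one, one_mul, abs_two] at E10 E20
    have P0 : ∑ k ∈ Finset.range n,
        (g 0 0 * Real.cos (k * π / (2 * n)) + g 0 1 * Real.sin (k * π / (2 * n)))^2
        = ∑ k ∈ Finset.range n, Real.cos (k * π / (2 * n))^2 := by
      apply aux_key_eq n _ _ (add_right_cancel E10) (add_right_cancel E20)
    -- and for row 1
    have E11 := hinv (Matrix.of ![![0, 0], ![0, 1]])
    have E21 := hinv (Matrix.of ![![0, 0], ![0, 2]])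
    rw [aux_Wn_row1, hB1] at E11 E21
    simp only [abs_one, one_mul, abs_two] at E11 E21
    have P1 : ∑ k ∈ Finset.range n,
        (g 1 0 * Real.cos (k * π / (2 * n)) + g 1 1 * Real.sin (k * π / (2 * n)))^2
        = ∑ k ∈ Finset.range n, Real.sin (k * π / (2 * n))^2 := by
      apply aux_key_eq n _ _ (add_right_cancel E11) (add_right_cancel E21)
    -- expand the quadratic sums
    have expand : ∀ a b : ℝ, ∑ k ∈ Finset.range n,
        (a * Real.cos (k * π / (2 * n)) + b * Real.sin (k * π / (2 * n)))^2
        = a^2 * (∑ k ∈ Finset.range n, Real.cos (k * π / (2 * n))^2)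
          + b^2 * (∑ k ∈ Finset.range n, Real.sin (k * π / (2 * n))^2)
          + 2*a*b * (∑ k ∈ Finset.range n,
              Real.cos (k * π / (2 * n)) * Real.sin (k * π / (2 * n))) := by
      intro a b
      rw [Finset.mul_sum, Finset.mul_sum, Finset.mul_sum,
        ← Finset.sum_add_distrib, ← Finset.sum_add_distrib]
      exact Finset.sum_congr rfl fun k _ => by ring
    rw [expand] at P0 P1
    constructor
    · refine ⟨h00, ?_⟩
      dsimp only
      linear_combination (∑ k ∈ Finset.range n, Real.cos (k * π / (2 * n))^2) * h00
        - P0 - (g 0 1)^2 * hCS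
    · refine ⟨by linarith [h11], ?_⟩
      dsimp only
      linear_combination P1
        - (∑ k ∈ Finset.range n, Real.sin (k * π / (2 * n))^2) * h11
        - (g 1 0)^2 * hCS
  · intro M _ N _ h
    simp only [Prod.mk.injEq] at h
    obtain ⟨⟨h1, h2⟩, h3, h4⟩ := h
    ext i j
    fin_cases i <;> fin_cases j <;> assumption
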